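/- Let n ≥ 2 and define e(v, u) := (n/2) λ_max(v ⊗ v − u) for v ∈ ℝⁿ, u ∈ Mₙ⁰. Then |v|²/2 ≤ e(v, u) for all (v, u) ∈ ℝⁿ × Mₙ⁰, with equality if and only if u = v ⊗ v − (|v|²/n) Iₙ. -/

import Mathlib

open scoped BigOperators

noncomputable section

/-- The Euclidean norm of a vector in `ℝ^m`. -/
def eNorm {m : ℕ} (v : Fin m → ℝ) : ℝ := Real.sqrt (∑ i, v i ^ 2)

/-- `Mₙ⁰`: the submodule of symmetric trace-free `n × n` real matrices. -/
def M0 (n : ℕ) : Submodule ℝ (Matrix (Fin n) (Fin n) ℝ) where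
  carrier := {A | A.IsSymm ∧ A.trace = 0}
  add_mem' := fun ha hb => ⟨ha.1.add hb.1, by rw [Matrix.trace_add, ha.2, hb.2, add_zero]⟩
  zero_mem' := ⟨Matrix.isSymm_zero, Matrix.trace_zero ..⟩
  smul_mem' := fun c _ hA => ⟨hA.1.smul c, by rw [Matrix.trace_smul, hA.2, smul_zero]⟩

/-- For `v ∈ ℝⁿ` and `u ∈ Mₙ⁰`, the matrix `v ⊗ v − u` is symmetric (hence Hermitian). -/
lemma herm_aux {n : ℕ} (v : Fin n → ℝ) (u : M0 n) :
    (Matrix.vecMulVec v v - (u : Matrix (Fin n) (Fin n) ℝ)).IsHermitian := by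
  rw [Matrix.IsHermitian, Matrix.conjTranspose_eq_transpose_of_trivial]
  have h1 : (Matrix.vecMulVec v v).IsSymm := by
    apply Matrix.IsSymm.ext
    intro i j
    simp [Matrix.vecMulVec_apply, mul_comm]
  exact h1.sub u.2.1

/-- `e(v, u) = (n/2) λ_max(v ⊗ v − u)`, where `λ_max` is the largest eigenvalue
of the symmetric matrix `v ⊗ v − u`. -/
def efun (n : ℕ) : (Fin n → ℝ) × M0 n → ℝ :=
  fun p => ((n : ℝ) / 2) * ⨆ i, (herm_aux p.1 p.2).eigenvalues i

/-! The trace of `v ⊗ v − u` is `|v|²` because `u` is trace-free. As the trace is the sum of the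
`n` eigenvalues, it is at most `n λ_max`, with equality exactly when every eigenvalue equals
`λ_max`, i.e. when `v ⊗ v − u` is the scalar matrix `(|v|²/n) Iₙ`. -/

theorem sum_le_card_mul_iSup {ι : Type*} [Fintype ι] (f : ι → ℝ) :
    ∑ i, f i ≤ Fintype.card ι * ⨆ i, f i := by
  simpa using Finset.sum_le_card_nsmul Finset.univ f _
    fun i _ ↦ le_ciSup (Set.finite_range f).bddAbove i

theorem sum_eq_card_mul_iSup_iff {ι : Type*} [Fintype ι] [Nonempty ι] (f : ι → ℝ) :
    ∑ i, f i = Fintype.card ι * ⨆ i, f i ↔ ∀ i, f i = (∑ j, f j) / Fintype.card ι := by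
  have hcard : (Fintype.card ι : ℝ) ≠ 0 := by positivity
  constructor
  · intro h i
    have hsum : ∑ j, f j = ∑ _j : ι, ⨆ k, f k := by simpa using h
    have hconst : ∀ j, f j = ⨆ k, f k := by
      simpa using (Finset.sum_eq_sum_iff_of_le
        fun j _ ↦ le_ciSup (Set.finite_range f).bddAbove j).1 hsum
    rw [h, hconst i]
    field_simp
  · intro h
    rw [funext h, ciSup_const]
    simp only [Finset.sum_const, Finset.card_univ, nsmul_eq_mul]

theorem Matrix.IsHermitian.eigenvalues_eq_const_iff {𝕜 ι : Type*} [RCLike 𝕜] [Fintype ι]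
    [DecidableEq ι] {A : Matrix ι ι 𝕜} (hA : A.IsHermitian) (c : ℝ) :
    (∀ i, hA.eigenvalues i = c) ↔ A = c • (1 : Matrix ι ι 𝕜) := by
  rw [RCLike.real_smul_eq_coe_smul (K := 𝕜), ← Algebra.algebraMap_eq_smul_one]
  constructor
  · intro h
    have hdiag : diagonal (RCLike.ofReal ∘ hA.eigenvalues) = algebraMap 𝕜 (Matrix ι ι 𝕜) c := by
      rw [algebraMap_eq_diagonal]
      congr 1
      ext i
      simp [h]
    rw [hA.spectral_theorem, hdiag, AlgHomClass.commutes]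
  · intro h i
    have : Nonempty ι := ⟨i⟩
    have hspec : (hA.eigenvalues i : 𝕜) ∈ spectrum 𝕜 (algebraMap 𝕜 (Matrix ι ι 𝕜) c) := by
      rw [← h, hA.spectrum_eq_image_range]
      exact Set.mem_image_of_mem _ (Set.mem_range_self i)
    simpa [spectrum.scalar_eq] using hspec

theorem trace_vecMulVec_self_sub {n : ℕ} (v : Fin n → ℝ) (u : M0 n) :
    (Matrix.vecMulVec v v - (u : Matrix (Fin n) (Fin n) ℝ)).trace = eNorm v ^ 2 := by
  rw [Matrix.trace_sub, Matrix.trace_vecMulVec, u.2.2, sub_zero, eNorm,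
    Real.sq_sqrt (by positivity)]
  simp only [dotProduct, sq]

theorem efun_lower_bound (n : ℕ) (hn : 2 ≤ n) (v : Fin n → ℝ) (u : M0 n) :
    eNorm v ^ 2 / 2 ≤ efun n (v, u) ∧
    (eNorm v ^ 2 / 2 = efun n (v, u) ↔
      (u : Matrix (Fin n) (Fin n) ℝ) =
        Matrix.vecMulVec v v - ((eNorm v ^ 2) / n) • (1 : Matrix (Fin n) (Fin n) ℝ)) := by
  have : Nonempty (Fin n) := ⟨⟨0, by omega⟩⟩
  have hA := herm_aux v u
  have hsum : ∑ i, hA.eigenvalues i = eNorm v ^ 2 := by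
    simpa using (hA.trace_eq_sum_eigenvalues.symm.trans (trace_vecMulVec_self_sub v u))
  have hefun : efun n (v, u) = n / 2 * ⨆ i, hA.eigenvalues i := rfl
  have hcard : (Fintype.card (Fin n) : ℝ) = n := by simp
  constructor
  · have hle := sum_le_card_mul_iSup hA.eigenvalues
    rw [hsum, hcard] at hle
    rw [hefun]
    linarith
  · calc eNorm v ^ 2 / 2 = efun n (v, u)
          ↔ ∑ i, hA.eigenvalues i = Fintype.card (Fin n) * ⨆ i, hA.eigenvalues i := by
            rw [hefun, hsum, hcard]
            constructor <;> intro h <;> linarith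
      _ ↔ ∀ i, hA.eigenvalues i = eNorm v ^ 2 / n := by
            rw [sum_eq_card_mul_iSup_iff, hsum, hcard]
      _ ↔ Matrix.vecMulVec v v - u = (eNorm v ^ 2 / n) • 1 := hA.eigenvalues_eq_const_iff _
      _ ↔ _ := ⟨fun h ↦ by rw [← h, sub_sub_cancel], fun h ↦ by rw [h, sub_sub_cancel]⟩

end
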